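/- arXiv:1611.05563 — 4 statements merged into one kernel-verified Lean document; each statement's English description precedes it below -/
import Mathlib

section
/- For every real number q, the limit as ε → 0 from the right of (d/dy)(e^{−qy}/(1 − e^{−y}))|_{y=ε} + 1/ε² equals (1 − 6q + 6q²)/12. -/
open Filter Topology

/-!
Writing `f y = e^{-qy} / (1 - e^{-y})`, one has
`f' y + 1 / y² = N y / (y² (1 - e^{-y})²)` with
`N y = (1 - e^{-y})² - y² e^{-qy} (q + (1 - q) e^{-y})`.
Expanding each exponential in `N` to fourth order gives
`N y = (1 - 6q + 6q²)/12 · y⁴ + O(y⁵)`, while `(1 - e^{-y}) / y → 1`.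
-/

open Real Asymptotics Finset Nat

theorem tendsto_div_pow_nhdsNE_of_isLittleO {𝕜 : Type*} [NormedField 𝕜] {f : 𝕜 → 𝕜} {c : 𝕜}
    {n : ℕ} (h : (fun x => f x - c * x ^ n) =o[𝓝 0] (· ^ n)) :
    Tendsto (fun x => f x / x ^ n) (𝓝[≠] 0) (𝓝 c) := by
  have h0 := (h.tendsto_div_nhds_zero.mono_left (nhdsWithin_le_nhds (s := {0}ᶜ))).add_const c
  rw [zero_add] at h0
  refine h0.congr' ?_
  filter_upwards [self_mem_nhdsWithin] with x (hx : x ≠ 0)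
  field_simp
  ring

theorem exp_mul_sub_sum_range_isBigO_pow (c : ℝ) (n : ℕ) :
    (fun y => exp (c * y) - ∑ i ∈ range n, (c * y) ^ i / i !) =O[𝓝 0] (· ^ n) := by
  have hc : Tendsto (fun y : ℝ => c * y) (𝓝 0) (𝓝 0) := by
    simpa using (continuous_const_mul c).tendsto 0
  refine ((exp_sub_sum_range_isBigO_pow n).comp_tendsto hc).trans ?_
  refine ((isBigO_refl (fun y : ℝ => y ^ n) (𝓝 0)).const_mul_left (c ^ n)).congr_left fun y => ?_
  simp [mul_pow]

theorem tendsto_one_sub_exp_neg_div :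
    Tendsto (fun y => (1 - exp (-y)) / y) (𝓝[≠] 0) (𝓝 1) := by
  suffices h : (fun y => 1 - exp (-y) - 1 * y ^ 1) =o[𝓝 0] (· ^ 1) by
    simpa using tendsto_div_pow_nhdsNE_of_isLittleO h
  have := ((exp_mul_sub_sum_range_isBigO_pow (-1) 2).trans_isLittleO
    (isLittleO_pow_pow one_lt_two)).neg_left
  refine this.congr_left fun y => ?_
  norm_num [sum_range_succ]
  ring

noncomputable def cuspNumerator (q y : ℝ) : ℝ :=
  (1 - exp (-y)) ^ 2 - y ^ 2 * exp (-(q * y)) * (q + (1 - q) * exp (-y))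

theorem cuspNumerator_sub_isBigO (q : ℝ) :
    (fun y => cuspNumerator q y - (1 - 6 * q + 6 * q ^ 2) / 12 * y ^ 4) =O[𝓝 0] (· ^ 5) := by
  let R : ℕ → ℝ → ℝ → ℝ := fun n c y => exp (c * y) - ∑ i ∈ range n, (c * y) ^ i / (i !)
  have hR : ∀ n c, R n c =O[𝓝 0] (· ^ n) := fun n c => exp_mul_sub_sum_range_isBigO_pow c n
  have hsq : ∀ c, (fun y => y ^ 2 * R 3 c y) =O[𝓝 0] (· ^ 5) := fun c =>
    ((isBigO_refl (· ^ 2) _).mul (hR 3 c)).congr_right fun y => by ring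
  have expansion : ∀ y, cuspNumerator q y - (1 - 6 * q + 6 * q ^ 2) / 12 * y ^ 4 =
      -2 * R 5 (-1) y + R 5 (-2) y - q * (y ^ 2 * R 3 (-q) y)
        - (1 - q) * (y ^ 2 * R 3 (-(q + 1)) y) := by
    intro y
    -- the Taylor polynomials reproduce `cuspNumerator` exactly through the `y⁴` term
    have e2 : exp (-2 * y) = exp (-y) ^ 2 := by rw [← exp_nat_mul]; ring_nf
    have e3 : exp (-(q + 1) * y) = exp (-(q * y)) * exp (-y) := by rw [← exp_add]; ring_nf
    simp only [R, cuspNumerator, sum_range_succ, sum_range_zero, e2, e3]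
    norm_num [Nat.factorial]
    ring
  simp only [expansion]
  exact ((((hR 5 (-1)).const_mul_left (-2)).add (hR 5 (-2))).sub
    ((hsq (-q)).const_mul_left q)).sub ((hsq (-(q + 1))).const_mul_left (1 - q))

theorem one_sub_exp_neg_ne_zero {y : ℝ} (hy : y ≠ 0) : 1 - exp (-y) ≠ 0 :=
  sub_ne_zero.mpr fun h => hy (neg_eq_zero.mp ((exp_eq_one_iff _).mp h.symm))

theorem hasDerivAt_exp_neg_mul_div_one_sub_exp_neg (q : ℝ) {y : ℝ} (hy : y ≠ 0) :
    HasDerivAt (fun y => exp (-(q * y)) / (1 - exp (-y)))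
      (-(exp (-(q * y)) * (q + (1 - q) * exp (-y))) / (1 - exp (-y)) ^ 2) y := by
  have hnum : HasDerivAt (fun y => exp (-(q * y))) (exp (-(q * y)) * -q) y := by
    simpa using ((hasDerivAt_id y).const_mul q).neg.exp
  have hden : HasDerivAt (fun y => 1 - exp (-y)) (exp (-y)) y := by
    simpa using (hasDerivAt_neg y).exp.const_sub 1
  exact (hnum.div hden (one_sub_exp_neg_ne_zero hy)).congr_deriv (by ring)

theorem deriv_exp_neg_mul_div_one_sub_exp_neg_add_inv_sq (q : ℝ) {y : ℝ} (hy : y ≠ 0) :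
    deriv (fun y => exp (-(q * y)) / (1 - exp (-y))) y + 1 / y ^ 2 =
      cuspNumerator q y / y ^ 4 * (y / (1 - exp (-y))) ^ 2 := by
  have hden := one_sub_exp_neg_ne_zero hy
  rw [(hasDerivAt_exp_neg_mul_div_one_sub_exp_neg q hy).deriv, cuspNumerator]
  field_simp
  ring

/-- Base case `p = 3` of the dimension moment computation:
`lim_{ε→0⁺} ( (d/dy)(e^{-qy}/(1 - e^{-y}))|_{y=ε} + 1/ε² ) = (1 - 6q + 6q²)/12`. -/
theorem dimension_moment_base_case (q : ℝ) :
    Tendsto (fun ε : ℝ =>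
        deriv (fun y : ℝ => Real.exp (-(q * y)) / (1 - Real.exp (-y))) ε + 1 / ε ^ 2)
      (nhdsWithin 0 (Set.Ioi 0)) (nhds ((1 - 6 * q + 6 * q ^ 2) / 12)) := by
  have hnum := tendsto_div_pow_nhdsNE_of_isLittleO
    ((cuspNumerator_sub_isBigO q).trans_isLittleO (isLittleO_pow_pow (by norm_num : 4 < 5)))
  have hfactor : Tendsto (fun y => y / (1 - exp (-y))) (𝓝[≠] 0) (𝓝 1) := by
    simpa using tendsto_one_sub_exp_neg_div.inv₀ one_ne_zero
  have hlim := hnum.mul (hfactor.pow 2)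
  rw [one_pow, mul_one] at hlim
  refine (hlim.congr' ?_).mono_left (nhdsGT_le_nhdsNE 0)
  filter_upwards [self_mem_nhdsWithin] with y hy
  exact (deriv_exp_neg_mul_div_one_sub_exp_neg_add_inv_sq q hy).symm
end

section
/- Let m be a natural number, let p : Fin m → ℂ be injective, let γ : Fin m → ℂ, and let g ∈ ℂ. Define q(z) = ∑_{i} ( (1/2)/(z − p_i)² + γ_i/(z − p_i) ) for z distinct from all p_i. If z³ q(z) − z/2 tends to g as |z| → ∞ (i.e. along the cobounded filter on ℂ), then the accessory parameters satisfy the three constraints: ∑_i γ_i = 0, ∑_i γ_i p_i = (1 − m)/2, and ∑_i (p_i + γ_i p_i²) = g. -/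
open Filter Bornology Topology

/-!
Near `∞`, each puncture contributes
`z³ (a/(z-p)² + γ/(z-p)) = γ z² + (a + γ p) z + (2 a p + γ p²) + O(1/z)`, so the hypothesis says
that a quadratic polynomial in `z`, whose coefficients are the three sums in question
(with `a = 1/2`), converges as `z → ∞`. A convergent polynomial is constant:
dividing by `z` twice leaves a function tending to its leading coefficient and to `0`.
-/

section NormedField

variable {𝕜 : Type*} [NormedField 𝕜]

lemma tendsto_inv_sub_const_cobounded (p : 𝕜) :
    Tendsto (fun z => (z - p)⁻¹) (cobounded 𝕜) (𝓝 0) :=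
  tendsto_inv₀_cobounded.comp (tendsto_sub_const_cobounded p)

lemma tendsto_div_self_cobounded_of_tendsto {f : 𝕜 → 𝕜} {g : 𝕜}
    (hf : Tendsto f (cobounded 𝕜) (𝓝 g)) :
    Tendsto (fun z => f z / z) (cobounded 𝕜) (𝓝 0) := by
  simpa [div_eq_mul_inv] using hf.mul tendsto_inv₀_cobounded

lemma tendsto_cube_mul_pole_sub_quadratic (a p γ : 𝕜) :
    Tendsto (fun z => z ^ 3 * (a / (z - p) ^ 2 + γ / (z - p))
        - (γ * z ^ 2 + (a + γ * p) * z + (2 * a * p + γ * p ^ 2))) (cobounded 𝕜) (𝓝 0) := by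
  have hu := tendsto_inv_sub_const_cobounded p
  have hlim := (hu.const_mul (3 * a * p ^ 2 + γ * p ^ 3)).add ((hu.pow 2).const_mul (a * p ^ 3))
  simp only [mul_zero, zero_pow two_ne_zero, add_zero] at hlim
  refine hlim.congr' ?_
  filter_upwards [eventually_ne_cobounded p] with z hz
  have hzp : z - p ≠ 0 := sub_ne_zero.mpr hz
  field_simp
  ring

lemma tendsto_cube_mul_sum_poles_sub_quadratic {ι : Type*} (s : Finset ι) (a p γ : ι → 𝕜) :
    Tendsto (fun z => z ^ 3 * ∑ i ∈ s, (a i / (z - p i) ^ 2 + γ i / (z - p i))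
        - ((∑ i ∈ s, γ i) * z ^ 2 + (∑ i ∈ s, (a i + γ i * p i)) * z
          + ∑ i ∈ s, (2 * a i * p i + γ i * p i ^ 2))) (cobounded 𝕜) (𝓝 0) := by
  convert tendsto_finsetSum s fun i _ => tendsto_cube_mul_pole_sub_quadratic (a i) (p i) (γ i)
    using 2
  · simp only [Finset.sum_sub_distrib, Finset.sum_add_distrib, ← Finset.mul_sum, ← Finset.sum_mul]
  · simp

end NormedField

lemma quadratic_coeffs_of_tendsto_cobounded {𝕜 : Type*} [NontriviallyNormedField 𝕜]
    {a b c g : 𝕜} (h : Tendsto (fun z => a * z ^ 2 + b * z + c) (cobounded 𝕜) (𝓝 g)) :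
    a = 0 ∧ b = 0 ∧ c = g := by
  have hdiv := tendsto_div_self_cobounded_of_tendsto h
  have hdiv₂ := tendsto_div_self_cobounded_of_tendsto hdiv
  have hinv : Tendsto (fun z : 𝕜 => z⁻¹) (cobounded 𝕜) (𝓝 0) := tendsto_inv₀_cobounded
  have ha : a = 0 := by
    have hlim := ((hinv.const_mul b).add ((hinv.pow 2).const_mul c)).const_add a
    simp only [mul_zero, zero_pow two_ne_zero, add_zero] at hlim
    refine tendsto_nhds_unique (hlim.congr' ?_) hdiv₂
    filter_upwards [eventually_ne_cobounded 0] with z hz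
    field_simp
    ring
  subst ha
  simp only [zero_mul, zero_add] at h hdiv
  have hb : b = 0 := by
    have hlim := (hinv.const_mul c).const_add b
    simp only [mul_zero, add_zero] at hlim
    refine tendsto_nhds_unique (hlim.congr' ?_) hdiv
    filter_upwards [eventually_ne_cobounded 0] with z hz
    field_simp
  subst hb
  exact ⟨rfl, rfl, by simpa using h⟩

theorem accessory_parameter_constraints_general (m : ℕ) (p γ : Fin m → ℂ)
    (g : ℂ)
    (h : Tendsto
      (fun z : ℂ =>
        z ^ 3 * (∑ i, ((1 / 2) / (z - p i) ^ 2 + γ i / (z - p i))) - z / 2)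
      (Bornology.cobounded ℂ) (nhds g)) :
    (∑ i, γ i = 0) ∧ (∑ i, γ i * p i = (1 - (m : ℂ)) / 2) ∧
      (∑ i, (p i + γ i * p i ^ 2) = g) := by
  have hrem := tendsto_cube_mul_sum_poles_sub_quadratic Finset.univ (fun _ => (1 / 2 : ℂ)) p γ
  have hquad : Tendsto (fun z => (∑ i, γ i) * z ^ 2 + (((m : ℂ) - 1) / 2 + ∑ i, γ i * p i) * z
      + ∑ i, (p i + γ i * p i ^ 2)) (cobounded ℂ) (𝓝 g) := by
    refine (sub_zero g ▸ h.sub hrem).congr fun z => ?_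
    simp only [Finset.sum_add_distrib, Finset.sum_const, Finset.card_univ, Fintype.card_fin,
      nsmul_eq_mul, mul_one_div_cancel (two_ne_zero' ℂ), one_mul]
    ring
  obtain ⟨h₀, h₁, h₂⟩ := quadratic_coeffs_of_tendsto_cobounded hquad
  exact ⟨h₀, by linear_combination h₁, h₂⟩

/-- Constraints on the accessory parameters of the Fuchsian uniformization of the
punctured sphere: if the Schwarzian `q(z) = ∑ᵢ ((1/2)/(z-pᵢ)² + γᵢ/(z-pᵢ))`
satisfies `z³ q(z) - z/2 → g` as `|z| → ∞`, then `∑γᵢ = 0`,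
`∑γᵢpᵢ = (1-m)/2` and `∑(pᵢ + γᵢpᵢ²) = g`. -/
theorem accessory_parameter_constraints (m : ℕ) (p γ : Fin m → ℂ)
    (hp : Function.Injective p) (g : ℂ)
    (h : Tendsto
      (fun z : ℂ =>
        z ^ 3 * (∑ i, ((1 / 2) / (z - p i) ^ 2 + γ i / (z - p i))) - z / 2)
      (Bornology.cobounded ℂ) (nhds g)) :
    (∑ i, γ i = 0) ∧ (∑ i, γ i * p i = (1 - (m : ℂ)) / 2) ∧
      (∑ i, (p i + γ i * p i ^ 2) = g) :=
  accessory_parameter_constraints_general m p γ g h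
end

section
/- Let a, b ∈ ℂ with |a|² + |b|² = 1, and let f(w) = (aw + b)/(−conj(b)·w + conj(a)). Let N be a natural number, β > 0 and t real, and let z : Fin N → ℂ satisfy −conj(b)·z_i + conj(a) ≠ 0 for all i. Define P(z) = ∏_{i<j} |z_i − z_j|^{2β} · ∏_i (1 + |z_i|²)^{−t}. Then P(f ∘ z) = ( ∏_i |−conj(b)·z_i + conj(a)|^{−2} )^{β(N−1) − t} · P(z); that is, the Laughlin probability density on the round sphere transforms under SU(2) Möbius maps with the weight ∏_i |f'(z_i)|^{β(N−1) − t}, where |f'(z_i)| = |−conj(b)·z_i + conj(a)|^{−2}. -/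
/-!
The matrix `[[a, b], [-conj b, conj a]]` is unitary, so in homogeneous coordinates `(z : 1)` the
Möbius map `f` preserves `|z|² + 1` up to the factor `|d(z)|²`, `d(z) = -conj(b) z + conj(a)`,
and it has determinant `1`, so `f(z) - f(w) = (z - w) / (d(z) d(w))`. Hence every Vandermonde
factor picks up `(|d(zᵢ)| |d(zⱼ)|)^{-2β}` and every one-body factor `|d(zᵢ)|^{2t}`; since each
index occurs in `N - 1` pairs, these collect into `(∏ᵢ |d(zᵢ)|^{-2})^{β(N-1)-t}`.
-/

open Finset ComplexConjugate

theorem Finset.prod_prod_Ioi_mul_eq_prod_pow {α M : Type*} [CommMonoid M] [LinearOrder α]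
    [Fintype α] [LocallyFiniteOrderTop α] [LocallyFiniteOrderBot α] (g : α → M) :
    ∏ i, ∏ j ∈ Ioi i, g i * g j = (∏ i, g i) ^ (Fintype.card α - 1) := by
  classical
  rw [prod_prod_Ioi_mul_eq_prod_prod_off_diag (fun _ y => g y), ← prod_pow]
  refine prod_congr rfl fun i _ => ?_
  rw [prod_const, card_compl, card_singleton]

theorem Real.prod_prod_Ioi_mul_rpow {N : ℕ} {u : Fin N → ℝ} (hu : ∀ i, 0 ≤ u i) (β : ℝ) :
    ∏ i, ∏ j ∈ Ioi i, (u i * u j) ^ β = (∏ i, u i) ^ (β * ((N : ℝ) - 1)) := by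
  cases N with
  | zero => simp
  | succ n =>
    simp_rw [Real.mul_rpow (hu _) (hu _)]
    rw [prod_prod_Ioi_mul_eq_prod_pow, Fintype.card_fin, Nat.add_sub_cancel,
      Real.finsetProd_rpow _ _ fun i _ => hu i, ← Real.rpow_natCast,
      ← Real.rpow_mul (prod_nonneg fun i _ => hu i)]
    push_cast
    ring_nf

theorem mobius_sub_mobius {K : Type*} [Field K] {a b c d z w : K}
    (hz : c * z + d ≠ 0) (hw : c * w + d ≠ 0) :
    (a * z + b) / (c * z + d) - (a * w + b) / (c * w + d)
      = (a * d - b * c) * (z - w) / ((c * z + d) * (c * w + d)) := by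
  rw [div_sub_div _ _ hz hw]
  ring

theorem Complex.norm_sq_add_norm_sq_su2 (a b z : ℂ) :
    ‖a * z + b‖ ^ 2 + ‖-conj b * z + conj a‖ ^ 2 = (‖a‖ ^ 2 + ‖b‖ ^ 2) * (1 + ‖z‖ ^ 2) := by
  simp only [Complex.sq_norm]
  apply Complex.ofReal_injective
  push_cast
  simp only [← Complex.mul_conj, map_add, map_mul, map_neg, Complex.conj_conj]
  ring

noncomputable def laughlinDensity {N : ℕ} (β t : ℝ) (z : Fin N → ℂ) : ℝ :=
  (∏ i, ∏ j ∈ Ioi i, ‖z i - z j‖ ^ (2 * β)) * ∏ i, (1 + ‖z i‖ ^ 2) ^ (-t)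

theorem laughlinDensity_eq_of_conformal {N : ℕ} (β t : ℝ) {x z : Fin N → ℂ} {D : Fin N → ℝ}
    (hD : ∀ i, 0 < D i) (hdist : ∀ i j, ‖x i - x j‖ = ‖z i - z j‖ / (D i * D j))
    (hnorm : ∀ i, 1 + ‖x i‖ ^ 2 = (1 + ‖z i‖ ^ 2) / D i ^ 2) :
    laughlinDensity β t x
      = (∏ i, D i ^ (-(2 : ℝ))) ^ (β * ((N : ℝ) - 1) - t) * laughlinDensity β t z := by
  have hu : ∀ i, 0 ≤ D i ^ (-(2 : ℝ)) := fun i => Real.rpow_nonneg (hD i).le _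
  have hpair : ∀ i j, ‖x i - x j‖ ^ (2 * β)
      = ‖z i - z j‖ ^ (2 * β) * (D i ^ (-(2 : ℝ)) * D j ^ (-(2 : ℝ))) ^ β := by
    intro i j
    have hDij : 0 < D i * D j := mul_pos (hD i) (hD j)
    rw [hdist, Real.div_rpow (norm_nonneg _) hDij.le, div_eq_mul_inv, ← Real.rpow_neg hDij.le,
      ← Real.mul_rpow (hD i).le (hD j).le, ← Real.rpow_mul hDij.le]
    ring_nf
  have hone : ∀ i, (1 + ‖x i‖ ^ 2) ^ (-t)
      = (1 + ‖z i‖ ^ 2) ^ (-t) * (D i ^ (-(2 : ℝ))) ^ (-t) := by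
    intro i
    have hDi := hD i
    rw [hnorm, Real.div_rpow (by positivity) (by positivity), Real.rpow_neg hDi.le 2,
      Real.rpow_two, Real.inv_rpow (by positivity), div_eq_mul_inv]
  have hU : 0 < ∏ i, D i ^ (-(2 : ℝ)) := prod_pos fun i _ => Real.rpow_pos_of_pos (hD i) _
  rw [laughlinDensity, laughlinDensity]
  simp_rw [hpair, hone, prod_mul_distrib, Real.prod_prod_Ioi_mul_rpow hu,
    Real.finsetProd_rpow _ _ fun i _ => hu i, sub_eq_add_neg, Real.rpow_add hU]
  ring

theorem laughlin_su2_covariance_general (a b : ℂ)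
    (h : ‖a‖ ^ 2 + ‖b‖ ^ 2 = 1)
    (N : ℕ) (β t : ℝ) (z : Fin N → ℂ)
    (hz : ∀ i, -(starRingEnd ℂ) b * z i + (starRingEnd ℂ) a ≠ 0) :
    (∏ i : Fin N, ∏ j ∈ Finset.Ioi i,
        ‖((a * z i + b) / (-(starRingEnd ℂ) b * z i + (starRingEnd ℂ) a) -
              (a * z j + b) / (-(starRingEnd ℂ) b * z j + (starRingEnd ℂ) a))‖ ^ (2 * β)) *
      ∏ i : Fin N,
        (1 + ‖((a * z i + b) / (-(starRingEnd ℂ) b * z i + (starRingEnd ℂ) a))‖ ^ 2) ^ (-t)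
    = (∏ i : Fin N,
          ‖(-(starRingEnd ℂ) b * z i + (starRingEnd ℂ) a)‖ ^ (-(2 : ℝ))) ^
          (β * ((N : ℝ) - 1) - t) *
      ((∏ i : Fin N, ∏ j ∈ Finset.Ioi i, ‖(z i - z j)‖ ^ (2 * β)) *
        ∏ i : Fin N, (1 + ‖(z i)‖ ^ 2) ^ (-t)) := by
  have hdet : a * conj a - b * -conj b = 1 := by
    rw [mul_neg, sub_neg_eq_add, Complex.mul_conj, Complex.mul_conj, ← Complex.ofReal_add,
      ← Complex.sq_norm, ← Complex.sq_norm, h, Complex.ofReal_one]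
  refine laughlinDensity_eq_of_conformal β t (fun i => norm_pos_iff.mpr (hz i))
    (fun i j => ?_) (fun i => ?_)
  · rw [mobius_sub_mobius (hz i) (hz j), hdet, one_mul, norm_div, norm_mul]
  · have hd : 0 < ‖-conj b * z i + conj a‖ := norm_pos_iff.mpr (hz i)
    rw [eq_div_iff (by positivity), norm_div, div_pow, add_mul, one_mul,
      div_mul_cancel₀ _ (by positivity), add_comm, Complex.norm_sq_add_norm_sq_su2, h, one_mul]

/-- Transformation law of the Laughlin probability density on the round sphere
under `SU(2)` Möbius maps `f(w) = (aw+b)/(-conj(b)w + conj(a))`, `|a|²+|b|² = 1`: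
with `P(z) = ∏_{i<j}|zᵢ-zⱼ|^{2β} ∏ᵢ(1+|zᵢ|²)^{-t}` one has
`P(f∘z) = (∏ᵢ |-conj(b)zᵢ + conj(a)|^{-2})^{β(N-1)-t} P(z)`. -/
theorem laughlin_su2_covariance (a b : ℂ)
    (h : ‖a‖ ^ 2 + ‖b‖ ^ 2 = 1)
    (N : ℕ) (β t : ℝ) (hβ : 0 < β) (z : Fin N → ℂ)
    (hz : ∀ i, -(starRingEnd ℂ) b * z i + (starRingEnd ℂ) a ≠ 0) :
    (∏ i : Fin N, ∏ j ∈ Finset.Ioi i,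
        ‖((a * z i + b) / (-(starRingEnd ℂ) b * z i + (starRingEnd ℂ) a) -
              (a * z j + b) / (-(starRingEnd ℂ) b * z j + (starRingEnd ℂ) a))‖ ^ (2 * β)) *
      ∏ i : Fin N,
        (1 + ‖((a * z i + b) / (-(starRingEnd ℂ) b * z i + (starRingEnd ℂ) a))‖ ^ 2) ^ (-t)
    = (∏ i : Fin N,
          ‖(-(starRingEnd ℂ) b * z i + (starRingEnd ℂ) a)‖ ^ (-(2 : ℝ))) ^
          (β * ((N : ℝ) - 1) - t) *
      ((∏ i : Fin N, ∏ j ∈ Finset.Ioi i, ‖(z i - z j)‖ ^ (2 * β)) *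
        ∏ i : Fin N, (1 + ‖(z i)‖ ^ 2) ^ (-t)) :=
  laughlin_su2_covariance_general a b h N β t z hz
end

section
/- Let H be a complex Hilbert space, U ⊆ ℂ open, and F : ℂ → H complex-differentiable on U with F(p) ≠ 0 for all p ∈ U. Set Z(p) = ‖F(p)‖² and Ψ(p) = Z(p)^{−1/2} · F(p). Fix p ∈ U, and let ∂₁Ψ and ∂₂Ψ denote the derivatives at t = 0 of the maps t ↦ Ψ(p + t) and t ↦ Ψ(p + it) for real t, and similarly ∂₁(log Z) and ∂₂(log Z) for the real-valued function log Z. Then ⟨Ψ(p), (1/2)(∂₁Ψ − i·∂₂Ψ)⟩ = (1/2) · (1/2)(∂₁(log Z) − i·∂₂(log Z)); that is, the Berry connection of a normalized holomorphic family equals one half the Wirtinger p-derivative of the logarithm of the normalization integral, so that log Z is a Kähler potential for the Berry curvature. -/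
/-!
Put `c = ⟪F p, F' p⟫` and `r = ‖F p‖²`. Along a real direction `v`, differentiating
`‖F‖⁻¹ • F` gives `⟪Ψ, ∂ᵥΨ⟫ = (v c - Re (v c)) / r`: normalizing removes exactly the real part,
which is `½ ∂ᵥ log Z = Re (v c) / r`. In the Wirtinger combination of the directions `1` and `i`
both sides become `c / (2 r)`.
-/

open scoped InnerProductSpace
open RCLike

theorem Real.sq_rpow_neg_half {a : ℝ} (ha : 0 ≤ a) : (a ^ 2) ^ (-(1 : ℝ) / 2) = a⁻¹ := by
  rw [neg_div, Real.rpow_neg (sq_nonneg a), ← Real.sqrt_eq_rpow, Real.sqrt_sq ha]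

section Normalize

variable {𝕜 E : Type*} [RCLike 𝕜] [NormedAddCommGroup E] [InnerProductSpace 𝕜 E]
  [NormedSpace ℝ E] {f : ℝ → E} {f' : E} {x : ℝ}

theorem HasDerivAt.norm_sq_re_inner (hf : HasDerivAt f f' x) :
    HasDerivAt (‖f ·‖ ^ 2) (2 * re ⟪f x, f'⟫_𝕜) x := by
  have h := (reCLM (K := 𝕜)).hasFDerivAt.comp_hasDerivAt x (hf.inner 𝕜 hf)
  simp only [Function.comp_def, reCLM_apply, inner_self_eq_norm_sq] at h
  refine h.congr_deriv ?_
  rw [map_add, inner_re_symm (𝕜 := 𝕜) f']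
  ring

theorem HasDerivAt.norm_of_ne_zero (hf : HasDerivAt f f' x) (hx : f x ≠ 0) :
    HasDerivAt (‖f ·‖) (re ⟪f x, f'⟫_𝕜 / ‖f x‖) x := by
  have h := (hf.norm_sq_re_inner (𝕜 := 𝕜)).sqrt (by positivity)
  simp only [Real.sqrt_sq (norm_nonneg _)] at h
  refine h.congr_deriv ?_
  field_simp

theorem inner_inv_norm_smul_deriv [IsScalarTower ℝ 𝕜 E] (hf : HasDerivAt f f' x)
    (hx : f x ≠ 0) :
    ⟪‖f x‖⁻¹ • f x, deriv (fun t => ‖f t‖⁻¹ • f t) x⟫_𝕜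
      = (⟪f x, f'⟫_𝕜 - re ⟪f x, f'⟫_𝕜) / (‖f x‖ ^ 2 : ℝ) := by
  have hinv := (hf.norm_of_ne_zero (𝕜 := 𝕜) hx).fun_inv (norm_ne_zero_iff.mpr hx)
  rw [(hinv.fun_smul hf).deriv]
  simp only [real_smul_eq_coe_smul (K := 𝕜), inner_add_right, inner_smul_left,
    inner_smul_right, inner_self_eq_norm_sq_to_K, conj_ofReal]
  push_cast
  field_simp
  ring

end Normalize

theorem DifferentiableAt.hasDerivAt_comp_line {H : Type*} [NormedAddCommGroup H]
    [NormedSpace ℂ H] {F : ℂ → H} {p : ℂ} (hF : DifferentiableAt ℂ F p) (v : ℂ) :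
    HasDerivAt (fun t : ℝ => F (p + t * v)) (v • deriv F p) 0 := by
  have hline : HasDerivAt (fun t : ℝ => p + t * v) v 0 := by
    simpa using (Complex.ofRealCLM.hasDerivAt.mul_const v).const_add p
  exact (by simpa using hF.hasDerivAt : HasDerivAt F (deriv F p) (p + (0 : ℝ) * v)).scomp 0 hline

theorem berry_connection_kahler_potential_general
    {H : Type*} [NormedAddCommGroup H] [InnerProductSpace ℂ H]
    (U : Set ℂ) (F : ℂ → H)
    (hF : ∀ p ∈ U, DifferentiableAt ℂ F p) (hF0 : ∀ p ∈ U, F p ≠ 0)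
    (Z : ℂ → ℝ) (hZ : ∀ p, Z p = ‖F p‖ ^ 2)
    (Ψ : ℂ → H) (hΨ : ∀ p, Ψ p = (Z p ^ (-(1 : ℝ) / 2)) • F p)
    (p : ℂ) (hp : p ∈ U) :
    (inner ℂ (Ψ p)
        ((1 / 2 : ℂ) •
          (deriv (fun t : ℝ => Ψ (p + (t : ℂ))) 0 -
            Complex.I • deriv (fun t : ℝ => Ψ (p + (t : ℂ) * Complex.I)) 0)) : ℂ)
    = (1 / 2 : ℂ) *
        ((1 / 2 : ℂ) *
          (((deriv (fun t : ℝ => Real.log (Z (p + (t : ℂ)))) 0 : ℝ) : ℂ) -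
            Complex.I * ((deriv (fun t : ℝ => Real.log (Z (p + (t : ℂ) * Complex.I))) 0 : ℝ) : ℂ))) := by
  obtain rfl : Z = fun q => ‖F q‖ ^ 2 := funext hZ
  obtain rfl : Ψ = fun q => ‖F q‖⁻¹ • F q :=
    funext fun q => by rw [hΨ, Real.sq_rpow_neg_half (norm_nonneg _)]
  set c := ⟪F p, deriv F p⟫_ℂ
  have hr : (‖F p‖ : ℂ) ≠ 0 := by simpa using hF0 p hp
  have hline (v : ℂ) := (hF p hp).hasDerivAt_comp_line v
  have hbase (v : ℂ) : F (p + ((0 : ℝ) : ℂ) * v) = F p := by simp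
  have berry (v : ℂ) : ⟪‖F p‖⁻¹ • F p,
      deriv (fun t : ℝ => ‖F (p + t * v)‖⁻¹ • F (p + t * v)) 0⟫_ℂ
        = (v * c - (v * c).re) / (‖F p‖ ^ 2 : ℝ) := by
    have h := inner_inv_norm_smul_deriv (𝕜 := ℂ) (hline v) (by rw [hbase]; exact hF0 p hp)
    simp only [hbase, inner_smul_right] at h
    exact h
  have log_norm_sq (v : ℂ) : deriv (fun t : ℝ => Real.log (‖F (p + t * v)‖ ^ 2)) 0
      = 2 * (v * c).re / ‖F p‖ ^ 2 := by
    simpa only [hbase, inner_smul_right, re_to_complex] using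
      (((hline v).norm_sq_re_inner (𝕜 := ℂ)).log (by simpa [hbase] using hF0 p hp)).deriv
  have berry_one := berry 1
  have log_norm_sq_one := log_norm_sq 1
  simp only [mul_one, one_mul] at berry_one log_norm_sq_one
  rw [inner_smul_right, inner_sub_right, inner_smul_right, berry_one, berry, log_norm_sq_one,
    log_norm_sq]
  simp only [Complex.I_mul_re]
  push_cast
  field_simp
  linear_combination 2 * (Complex.re_add_im c).symm - c * Complex.I_sq

/-- The Berry connection of a normalized holomorphic family of states equals one
half the Wirtinger `p`-derivative of `log Z`, i.e. `log Z` is a Kähler potential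
for the Berry curvature: for `Ψ(p) = Z(p)^{-1/2} F(p)` with `F` holomorphic and
nonvanishing on an open set `U`, `Z(p) = ‖F(p)‖²`,
`⟨Ψ, ∂_p Ψ⟩ = (1/2) ∂_p log Z` at every `p ∈ U`,
where `∂_p = (1/2)(∂₁ - i ∂₂)`. -/
theorem berry_connection_kahler_potential
    {H : Type*} [NormedAddCommGroup H] [InnerProductSpace ℂ H]
    (U : Set ℂ) (hU : IsOpen U) (F : ℂ → H)
    (hF : ∀ p ∈ U, DifferentiableAt ℂ F p) (hF0 : ∀ p ∈ U, F p ≠ 0)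
    (Z : ℂ → ℝ) (hZ : ∀ p, Z p = ‖F p‖ ^ 2)
    (Ψ : ℂ → H) (hΨ : ∀ p, Ψ p = (Z p ^ (-(1 : ℝ) / 2)) • F p)
    (p : ℂ) (hp : p ∈ U) :
    (inner ℂ (Ψ p)
        ((1 / 2 : ℂ) •
          (deriv (fun t : ℝ => Ψ (p + (t : ℂ))) 0 -
            Complex.I • deriv (fun t : ℝ => Ψ (p + (t : ℂ) * Complex.I)) 0)) : ℂ)
    = (1 / 2 : ℂ) *
        ((1 / 2 : ℂ) *
          (((deriv (fun t : ℝ => Real.log (Z (p + (t : ℂ)))) 0 : ℝ) : ℂ) -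
            Complex.I * ((deriv (fun t : ℝ => Real.log (Z (p + (t : ℂ) * Complex.I))) 0 : ℝ) : ℂ))) :=
  berry_connection_kahler_potential_general U F hF hF0 Z hZ Ψ hΨ p hp
end
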